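/- As |p| → +∞ one has c̄(|p|) → ∫₀¹ g(s) ds, and the correctors χ_p normalized by χ_p(0) = 0 satisfy χ_p(z) → z uniformly on ℝ together with χ_p'(z) → 1 uniformly on ℝ. -/

import Mathlib

open Set Filter intervalIntegral
open scoped Topology

noncomputable section

/-- A corrector for `(p, c)`: a C² function `χ : ℝ → ℝ` with `χ' > 0`, `χ(z+1) = χ(z) + 1`,
satisfying `|p|²·χ''(z) − c·χ'(z) + g(χ(z)) = 0` for all `z ∈ ℝ`. -/
def IsCorrector {n : ℕ} (g : ℝ → ℝ) (p : EuclideanSpace ℝ (Fin n)) (c : ℝ) (χ : ℝ → ℝ) : Prop :=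
  ContDiff ℝ 2 χ ∧ (∀ z, 0 < deriv χ z) ∧ (∀ z, χ (z + 1) = χ z + 1) ∧
  ∀ z, ‖p‖ ^ 2 * deriv (deriv χ) z - c * deriv χ z + g (χ z) = 0

/-!
Integrating the equation over a period gives `c = ∫₀¹ g(χ)`, so `min g ≤ c ≤ max g`. At a maximum
of the periodic function `χ'` the equation reads `c χ' = g(χ)`, whence `χ' ≤ max g / min g`, and
then the equation itself bounds `|p|² |χ''|` by `(max g)² / min g`. As `χ'` is periodic with mean
`1` and `χ - id` is periodic and vanishes at `0`, both stay within `O(|p|⁻²)` of `1` and `0`.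
Finally, substituting `s = χ(z)` gives `c - ∫₀¹ g = ∫₀¹ g(χ) (1 - χ')`, which is `O(|p|⁻²)` too.
-/

namespace Function.Periodic

variable {f : ℝ → ℝ} {c : ℝ}

lemma exists_forall_le_of_continuous (hp : Periodic f c) (hc : c ≠ 0) (hf : Continuous f) :
    ∃ x₀, ∀ x, f x ≤ f x₀ := by
  obtain ⟨_, ⟨x₀, rfl⟩, hx₀⟩ :=
    (hp.compact_of_continuous hc hf).exists_isGreatest (range_nonempty f)
  exact ⟨x₀, fun x => hx₀ ⟨x, rfl⟩⟩

lemma exists_forall_ge_of_continuous (hp : Periodic f c) (hc : c ≠ 0) (hf : Continuous f) :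
    ∃ x₀, ∀ x, f x₀ ≤ f x := by
  obtain ⟨_, ⟨x₀, rfl⟩, hx₀⟩ :=
    (hp.compact_of_continuous hc hf).exists_isLeast (range_nonempty f)
  exact ⟨x₀, fun x => hx₀ ⟨x, rfl⟩⟩

lemma abs_sub_le_of_abs_deriv_le {L : ℝ} (hp : Periodic f c) (hc : 0 < c)
    (hf : Differentiable ℝ f) (hf' : ∀ x, |deriv f x| ≤ L) (x y : ℝ) : |f x - f y| ≤ L * c := by
  obtain ⟨y', ⟨hxy', hy'x⟩, hy⟩ := hp.exists_mem_Ico hc y x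
  have hL : 0 ≤ L := (abs_nonneg _).trans (hf' x)
  calc |f x - f y| = ‖f y' - f x‖ := by rw [hy, Real.norm_eq_abs, abs_sub_comm]
    _ ≤ L * ‖y' - x‖ :=
      convex_univ.norm_image_sub_le_of_norm_deriv_le (fun z _ => hf z) (fun z _ => hf' z)
        (mem_univ x) (mem_univ y')
    _ ≤ L * c := by
      rw [Real.norm_eq_abs, abs_of_nonneg (by linarith)]
      exact mul_le_mul_of_nonneg_left (by linarith) hL

end Function.Periodic

lemma abs_sub_integral_le_of_forall_abs_sub_le {f : ℝ → ℝ} {x L : ℝ}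
    (hf : IntervalIntegrable f MeasureTheory.volume 0 1) (h : ∀ y, |f x - f y| ≤ L) :
    |f x - ∫ y in (0:ℝ)..1, f y| ≤ L := by
  have hmean : f x - ∫ y in (0:ℝ)..1, f y = ∫ y in (0:ℝ)..1, (f x - f y) := by
    rw [integral_sub intervalIntegrable_const hf, integral_const, sub_zero, one_smul]
  simpa [hmean] using norm_integral_le_of_norm_le_const (a := 0) (b := 1)
    (f := fun y => f x - f y) fun y _ => h y

lemma tendstoUniformly_of_dist_le {ι α β : Type*} [PseudoMetricSpace β] {l : Filter ι}
    {F : ι → α → β} {f : α → β} {b : ι → ℝ} (hb : Tendsto b l (𝓝 0))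
    (h : ∀ᶠ i in l, ∀ x, dist (f x) (F i x) ≤ b i) : TendstoUniformly F f l :=
  Metric.tendstoUniformly_iff.2 fun _ hε =>
    (h.and (hb.eventually (gt_mem_nhds hε))).mono fun _ hi x => (hi.1 x).trans_lt hi.2

lemma tendsto_const_div_norm_sq_comap_norm_atTop {E : Type*} [Norm E] (C : ℝ) :
    Tendsto (fun p : E => C / ‖p‖ ^ 2) (comap norm atTop) (𝓝 0) :=
  tendsto_const_nhds.div_atTop <| (tendsto_pow_atTop two_ne_zero).comp tendsto_comap

lemma exists_pos_bounds_of_periodic {g : ℝ → ℝ} (hgc : Continuous g) (hper : Function.Periodic g 1)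
    (hpos : ∀ y, 0 < g y) : ∃ m M, 0 < m ∧ ∀ y, m ≤ g y ∧ g y ≤ M := by
  obtain ⟨y₀, hy₀⟩ := hper.exists_forall_ge_of_continuous one_ne_zero hgc
  obtain ⟨y₁, hy₁⟩ := hper.exists_forall_le_of_continuous one_ne_zero hgc
  exact ⟨g y₀, g y₁, hpos y₀, fun y => ⟨hy₀ y, hy₁ y⟩⟩

namespace IsCorrector

variable {n : ℕ} {g χ : ℝ → ℝ} {p : EuclideanSpace ℝ (Fin n)} {c m M : ℝ}

lemma differentiable (h : IsCorrector g p c χ) : Differentiable ℝ χ :=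
  h.1.differentiable two_ne_zero

lemma contDiff_one_deriv (h : IsCorrector g p c χ) : ContDiff ℝ 1 (deriv χ) :=
  (contDiff_succ_iff_deriv (n := 1)).1 h.1 |>.2.2

lemma differentiable_deriv (h : IsCorrector g p c χ) : Differentiable ℝ (deriv χ) :=
  h.contDiff_one_deriv.differentiable one_ne_zero

lemma continuous_deriv_deriv (h : IsCorrector g p c χ) : Continuous (deriv (deriv χ)) :=
  h.contDiff_one_deriv.continuous_deriv le_rfl

lemma periodic_sub_id (h : IsCorrector g p c χ) : Function.Periodic (fun z => χ z - z) 1 :=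
  fun z => by simp only [h.2.2.1 z]; ring

lemma periodic_deriv (h : IsCorrector g p c χ) : Function.Periodic (deriv χ) 1 := fun z => by
  rw [← deriv_comp_add_const, funext h.2.2.1, deriv_add_const]

lemma integral_deriv (h : IsCorrector g p c χ) : ∫ z in (0:ℝ)..1, deriv χ z = 1 := by
  rw [integral_deriv_eq_sub (fun x _ => h.differentiable x)
    (h.differentiable_deriv.continuous.intervalIntegrable 0 1), ← zero_add 1, h.2.2.1, zero_add,
    add_sub_cancel_left]

lemma comp_eq (h : IsCorrector g p c χ) :
    (fun z => g (χ z)) = fun z => c * deriv χ z - ‖p‖ ^ 2 * deriv (deriv χ) z :=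
  funext fun z => by linarith [h.2.2.2 z]

lemma continuous_comp (h : IsCorrector g p c χ) : Continuous fun z => g (χ z) := by
  rw [h.comp_eq]
  exact (continuous_const.mul h.differentiable_deriv.continuous).sub
    (continuous_const.mul h.continuous_deriv_deriv)

lemma eq_integral_comp (h : IsCorrector g p c χ) : c = ∫ z in (0:ℝ)..1, g (χ z) := by
  have hint2 : ∫ z in (0:ℝ)..1, deriv (deriv χ) z = 0 := by
    rw [integral_deriv_eq_sub (fun x _ => h.differentiable_deriv x)
      (h.continuous_deriv_deriv.intervalIntegrable 0 1), ← zero_add 1, h.periodic_deriv, sub_self]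
  have hφ := h.differentiable_deriv.continuous
  rw [h.comp_eq, integral_sub (f := fun z => c * deriv χ z)
    (g := fun z => ‖p‖ ^ 2 * deriv (deriv χ) z) ((continuous_const.mul hφ).intervalIntegrable 0 1)
    ((continuous_const.mul h.continuous_deriv_deriv).intervalIntegrable 0 1),
    integral_const_mul, integral_const_mul, h.integral_deriv, hint2]
  ring

lemma le_of_forall_le (h : IsCorrector g p c χ) (hM : ∀ y, g y ≤ M) : c ≤ M := by
  have hle : ∫ z in (0:ℝ)..1, g (χ z) ≤ ∫ _ in (0:ℝ)..1, M :=
    integral_mono_on zero_le_one (h.continuous_comp.intervalIntegrable 0 1)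
      intervalIntegrable_const fun z _ => hM (χ z)
  simpa [← h.eq_integral_comp] using hle

lemma ge_of_forall_ge (h : IsCorrector g p c χ) (hm : ∀ y, m ≤ g y) : m ≤ c := by
  have hle : ∫ _ in (0:ℝ)..1, m ≤ ∫ z in (0:ℝ)..1, g (χ z) :=
    integral_mono_on zero_le_one intervalIntegrable_const
      (h.continuous_comp.intervalIntegrable 0 1) fun z _ => hm (χ z)
  simpa [← h.eq_integral_comp] using hle

lemma deriv_le (h : IsCorrector g p c χ) (hm0 : 0 < m) (hm : ∀ y, m ≤ g y)
    (hM : ∀ y, g y ≤ M) (z : ℝ) : deriv χ z ≤ M / m := by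
  obtain ⟨z₀, hz₀⟩ := h.periodic_deriv.exists_forall_le_of_continuous one_ne_zero
    h.differentiable_deriv.continuous
  have hcrit : deriv (deriv χ) z₀ = 0 :=
    IsLocalMax.deriv_eq_zero (Filter.Eventually.of_forall hz₀)
  have hmc := h.ge_of_forall_ge hm
  have hbal : c * deriv χ z₀ = g (χ z₀) := by
    have := h.2.2.2 z₀
    rw [hcrit, mul_zero] at this
    linarith
  calc deriv χ z ≤ deriv χ z₀ := hz₀ z
    _ ≤ M / m := by
      rw [le_div_iff₀ hm0]
      nlinarith [h.2.1 z₀, hM (χ z₀)]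

lemma norm_sq_mul_abs_deriv_deriv_le (h : IsCorrector g p c χ) (hm0 : 0 < m)
    (hm : ∀ y, m ≤ g y) (hM : ∀ y, g y ≤ M) (z : ℝ) :
    ‖p‖ ^ 2 * |deriv (deriv χ) z| ≤ M ^ 2 / m := by
  have hgz := hm (χ z)
  have hMgz := hM (χ z)
  have hcM := h.le_of_forall_le hM
  have hφ := h.deriv_le hm0 hm hM z
  have hφ0 := (h.2.1 z).le
  have hMm : M ≤ M ^ 2 / m := by
    rw [le_div_iff₀ hm0]; nlinarith
  have hcφ : c * deriv χ z ≤ M ^ 2 / m := by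
    calc c * deriv χ z ≤ M * (M / m) := mul_le_mul hcM hφ hφ0 (by linarith)
      _ = M ^ 2 / m := by ring
  have hcφ0 : 0 ≤ c * deriv χ z := mul_nonneg (by linarith [h.ge_of_forall_ge hm]) hφ0
  rw [← abs_of_nonneg (sq_nonneg ‖p‖), ← abs_mul, abs_le]
  constructor <;> linarith [h.2.2.2 z]

lemma abs_deriv_deriv_le (h : IsCorrector g p c χ) (hp : p ≠ 0) (hm0 : 0 < m)
    (hm : ∀ y, m ≤ g y) (hM : ∀ y, g y ≤ M) (z : ℝ) :
    |deriv (deriv χ) z| ≤ M ^ 2 / m / ‖p‖ ^ 2 := by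
  rw [le_div_iff₀ (by positivity), mul_comm]
  exact h.norm_sq_mul_abs_deriv_deriv_le hm0 hm hM z

lemma abs_deriv_sub_one_le (h : IsCorrector g p c χ) (hp : p ≠ 0) (hm0 : 0 < m)
    (hm : ∀ y, m ≤ g y) (hM : ∀ y, g y ≤ M) (z : ℝ) :
    |deriv χ z - 1| ≤ M ^ 2 / m / ‖p‖ ^ 2 := by
  rw [← h.integral_deriv]
  refine abs_sub_integral_le_of_forall_abs_sub_le
    (h.differentiable_deriv.continuous.intervalIntegrable 0 1) fun w => ?_
  simpa using h.periodic_deriv.abs_sub_le_of_abs_deriv_le one_pos h.differentiable_deriv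
    (h.abs_deriv_deriv_le hp hm0 hm hM) z w

lemma abs_sub_id_le (h : IsCorrector g p c χ) (h0 : χ 0 = 0) (hp : p ≠ 0) (hm0 : 0 < m)
    (hm : ∀ y, m ≤ g y) (hM : ∀ y, g y ≤ M) (z : ℝ) :
    |χ z - z| ≤ M ^ 2 / m / ‖p‖ ^ 2 := by
  have hd : ∀ t, HasDerivAt (fun z => χ z - z) (deriv χ t - 1) t := fun t =>
    (h.differentiable t).hasDerivAt.sub (hasDerivAt_id t)
  simpa [h0] using h.periodic_sub_id.abs_sub_le_of_abs_deriv_le one_pos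
    (fun t => (hd t).differentiableAt)
    (fun t => (hd t).deriv ▸ h.abs_deriv_sub_one_le hp hm0 hm hM t) z 0

lemma abs_sub_integral_le (h : IsCorrector g p c χ) (hg : Continuous g) (h0 : χ 0 = 0)
    (hp : p ≠ 0) (hm0 : 0 < m) (hm : ∀ y, m ≤ g y) (hM : ∀ y, g y ≤ M) :
    |c - ∫ s in (0:ℝ)..1, g s| ≤ M * (M ^ 2 / m / ‖p‖ ^ 2) := by
  have h1 : χ 1 = 1 := by rw [← zero_add 1, h.2.2.1, h0]
  have hsubst : ∫ z in (0:ℝ)..1, g (χ z) * deriv χ z = ∫ s in (0:ℝ)..1, g s := by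
    simpa [h0, h1] using integral_comp_mul_deriv (a := 0) (b := 1)
      (fun x _ => (h.differentiable x).hasDerivAt) h.differentiable_deriv.continuous.continuousOn hg
  have hdiff : c - ∫ s in (0:ℝ)..1, g s = ∫ z in (0:ℝ)..1, g (χ z) * (1 - deriv χ z) := by
    rw [← hsubst, h.eq_integral_comp, ← integral_sub (f := fun z => g (χ z))
      (g := fun z => g (χ z) * deriv χ z) (h.continuous_comp.intervalIntegrable 0 1)
      ((h.continuous_comp.mul h.differentiable_deriv.continuous).intervalIntegrable 0 1)]
    simp only [mul_sub, mul_one]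
  rw [hdiff]
  simpa using norm_integral_le_of_norm_le_const (a := 0) (b := 1)
    (f := fun z => g (χ z) * (1 - deriv χ z)) fun z _ => by
    rw [Real.norm_eq_abs, abs_mul, abs_sub_comm, abs_of_pos (hm0.trans_le (hm _))]
    exact mul_le_mul (hM _) (h.abs_deriv_sub_one_le hp hm0 hm hM z) (abs_nonneg _)
      ((hm0.trans_le (hm 0)).le.trans (hM 0))

end IsCorrector

/-- As `|p| → +∞`, `c̄(|p|) → ∫₀¹ g` and the correctors `χ_p` normalized by `χ_p(0) = 0`
satisfy `χ_p(z) → z` uniformly on `ℝ`, together with `χ_p'(z) → 1` uniformly on `ℝ`. -/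
theorem statement_7 {n : ℕ} (g : ℝ → ℝ) (hg : ∃ K, LipschitzWith K g)
    (hper : ∀ y, g (y + 1) = g y) (hpos : ∀ y, 0 < g y)
    (cbar : EuclideanSpace ℝ (Fin n) → ℝ) (χfun : EuclideanSpace ℝ (Fin n) → ℝ → ℝ)
    (hcorr : ∀ p, IsCorrector g p (cbar p) (χfun p))
    (hnorm : ∀ p, χfun p 0 = 0) :
    Tendsto cbar (comap (fun p : EuclideanSpace ℝ (Fin n) => ‖p‖) atTop)
      (𝓝 (∫ s in (0:ℝ)..1, g s)) ∧
    TendstoUniformly (fun p z => χfun p z) (fun z => z)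
      (comap (fun p : EuclideanSpace ℝ (Fin n) => ‖p‖) atTop) ∧
    TendstoUniformly (fun p z => deriv (χfun p) z) (fun _ => 1)
      (comap (fun p : EuclideanSpace ℝ (Fin n) => ‖p‖) atTop) := by
  obtain ⟨K, hK⟩ := hg
  obtain ⟨m, M, hm0, hbd⟩ := exists_pos_bounds_of_periodic hK.continuous hper hpos
  have hm : ∀ y, m ≤ g y := fun y => (hbd y).1
  have hM : ∀ y, g y ≤ M := fun y => (hbd y).2
  have hne : ∀ᶠ p : EuclideanSpace ℝ (Fin n) in comap (‖·‖) atTop, p ≠ 0 :=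
    (tendsto_comap.eventually (eventually_gt_atTop 0)).mono fun _ => norm_pos_iff.1
  have hL := tendsto_const_div_norm_sq_comap_norm_atTop (E := EuclideanSpace ℝ (Fin n)) (M ^ 2 / m)
  refine ⟨?_, ?_, ?_⟩
  · refine tendsto_iff_dist_tendsto_zero.2 <| squeeze_zero' (.of_forall fun _ => dist_nonneg)
      (hne.mono fun p hp => ?_) (by simpa using hL.const_mul M)
    exact (hcorr p).abs_sub_integral_le hK.continuous (hnorm p) hp hm0 hm hM
  · refine tendstoUniformly_of_dist_le hL (hne.mono fun p hp z => ?_)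
    rw [dist_comm, Real.dist_eq]
    exact (hcorr p).abs_sub_id_le (hnorm p) hp hm0 hm hM z
  · refine tendstoUniformly_of_dist_le hL (hne.mono fun p hp z => ?_)
    rw [dist_comm, Real.dist_eq]
    exact (hcorr p).abs_deriv_sub_one_le hp hm0 hm hM z
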